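/- For n ≥ 2 and 1 ≤ k ≤ n-1, the number of connected interval-clique graphs on {1,...,n} with exactly k maximal cliques equals (1/(n-1)) · C(n-1, k) · C(n-1, k-1). -/

import Mathlib

/-- Interval-clique property: whenever `i < j` are adjacent, `{i,...,j}` is a clique. -/
def IntervalClique {n : ℕ} (G : SimpleGraph (Fin n)) : Prop :=
  ∀ i j k l : Fin n, i < j → G.Adj i j → i ≤ k → k ≤ j → i ≤ l → l ≤ j → k ≠ l → G.Adj k l

/-- `s` is a maximal clique of `G`. -/
def IsMaxClique {n : ℕ} (G : SimpleGraph (Fin n)) (s : Finset (Fin n)) : Prop :=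
  G.IsClique (s : Set (Fin n)) ∧ ∀ t : Finset (Fin n), G.IsClique (t : Set (Fin n)) → s ⊆ t → s = t

/-- The number of maximal cliques of `G`. -/
noncomputable def numMaxCliques {n : ℕ} (G : SimpleGraph (Fin n)) : ℕ :=
  Nat.card {s : Finset (Fin n) // IsMaxClique G s}


/-!
A connected interval-clique graph is determined by its reach map `f`, where `f i` is the largest
neighbour of `i` (or `i` itself): `f` is monotone, `i < f i` except at the last vertex, and the
maximal cliques are the intervals `[i, f i]` at the points `i` where `f` takes a new value. Such a
map with `k` values is in turn determined by two `(k-1)`-subsets of the `n - 2` inner vertices: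
the points `A` where a new value starts (other than the first vertex) and the values `B` (other
than the last vertex). The condition `i < f i` says exactly that every initial segment contains at
least as many points of `A` as of `B`. Exchanging the parts of `A` and `B` beyond the first point
where `B` overtakes `A` (the reflection principle) matches the pairs violating this with all pairs
of sizes `(k - 2, k)`, so there are `C(n-2, k-1)² - C(n-2, k-2) C(n-2, k)` of them, the Narayana
number `C(n-1, k) C(n-1, k-1) / (n-1)`.
-/

open Finset

section LevelStarts

variable {α β : Type*} [LinearOrder α] [Fintype α] [LinearOrder β] {f g : α → β}

def levelStarts (f : α → β) : Finset α :=
  {i | ∀ j < i, f j < f i}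

@[simp]
lemma mem_levelStarts {i : α} : i ∈ levelStarts f ↔ ∀ j < i, f j < f i := by
  simp [levelStarts]

lemma bot_mem_levelStarts [OrderBot α] : ⊥ ∈ levelStarts f :=
  mem_levelStarts.2 fun _ hj => absurd hj not_lt_bot

lemma injOn_levelStarts : Set.InjOn f (levelStarts f) := by
  intro p hp q hq h
  by_contra hpq
  rcases lt_or_gt_of_ne hpq with hlt | hlt
  · exact (mem_levelStarts.1 hq p hlt).ne h
  · exact (mem_levelStarts.1 hp q hlt).ne' h

lemma Monotone.exists_mem_levelStarts (hf : Monotone f) (i : α) :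
    ∃ p ∈ levelStarts f, p ≤ i ∧ f p = f i := by
  classical
  let s : Finset α := {j | f j = f i}
  have hs : s.Nonempty := ⟨i, by simp [s]⟩
  have hfp : f (s.min' hs) = f i := by simpa [s] using s.min'_mem hs
  refine ⟨s.min' hs, mem_levelStarts.2 fun j hj => (hf hj.le).lt_of_ne fun hfj => ?_,
    s.min'_le i (by simp [s]), hfp⟩
  exact (s.min'_le j (by simp [s, hfj, hfp])).not_gt hj

lemma Monotone.image_levelStarts (hf : Monotone f) : (levelStarts f).image f = univ.image f := by
  refine (image_subset_image (subset_univ _)).antisymm fun v hv => ?_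
  obtain ⟨i, -, rfl⟩ := mem_image.1 hv
  obtain ⟨p, hp, -, hfp⟩ := hf.exists_mem_levelStarts i
  exact mem_image.2 ⟨p, hp, hfp⟩

lemma Monotone.card_levelStarts (hf : Monotone f) : #(levelStarts f) = #(univ.image f) := by
  rw [← hf.image_levelStarts, card_image_of_injOn injOn_levelStarts]

lemma Monotone.image_filter_levelStarts_le (hf : Monotone f) (i : α) :
    {p ∈ levelStarts f | p ≤ i}.image f = {v ∈ univ.image f | v ≤ f i} := by
  ext v
  simp only [mem_image, mem_filter, mem_univ, true_and]
  constructor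
  · rintro ⟨p, ⟨-, hpi⟩, rfl⟩
    exact ⟨⟨p, rfl⟩, hf hpi⟩
  · rintro ⟨⟨j, rfl⟩, hji⟩
    obtain ⟨p, hp, -, hfp⟩ := hf.exists_mem_levelStarts j
    refine ⟨p, ⟨hp, le_of_not_gt fun hip => ?_⟩, hfp⟩
    exact (mem_levelStarts.1 hp i hip).not_ge (hfp ▸ hji)

lemma Monotone.card_filter_image_le (hf : Monotone f) (i : α) :
    #{v ∈ univ.image f | v ≤ f i} = #{p ∈ levelStarts f | p ≤ i} := by
  rw [← hf.image_filter_levelStarts_le,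
    card_image_of_injOn (injOn_levelStarts.mono (coe_subset.2 (filter_subset _ _)))]

lemma Finset.eq_of_card_filter_le_eq {s : Finset β} {x y : β} (hx : x ∈ s) (hy : y ∈ s)
    (h : #{v ∈ s | v ≤ x} = #{v ∈ s | v ≤ y}) : x = y := by
  by_contra hxy
  wlog hlt : x < y generalizing x y
  · exact this hy hx h.symm (Ne.symm hxy) (lt_of_le_of_ne (not_lt.1 hlt) (Ne.symm hxy))
  refine (card_lt_card ((ssubset_iff_of_subset ?_).2 ⟨y, ?_, ?_⟩)).ne h
  · intro v hv
    simp only [mem_filter] at hv ⊢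
    exact ⟨hv.1, hv.2.trans hlt.le⟩
  · simp [hy]
  · simp [hlt]

lemma Monotone.eq_of_levelStarts_eq_of_image_eq (hf : Monotone f) (hg : Monotone g)
    (hs : levelStarts f = levelStarts g) (hr : univ.image f = univ.image g) : f = g := by
  funext i
  refine eq_of_card_filter_le_eq (s := univ.image f) (mem_image_of_mem f (mem_univ i))
    (hr ▸ mem_image_of_mem g (mem_univ i)) ?_
  rw [hf.card_filter_image_le, hs, ← hg.card_filter_image_le, hr]

end LevelStarts

section ReachGraph

variable {α : Type*} [LinearOrder α] {f : α → α}

/-- `f i` is the farthest vertex that `i` sees to its right in a connected interval-clique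
graph. -/
def IsReachMap (f : α → α) : Prop :=
  Monotone f ∧ ∀ i, ¬IsMax i → i < f i

lemma IsReachMap.le_apply (hf : IsReachMap f) (i : α) : i ≤ f i := by
  by_contra! h
  exact (hf.2 _ (not_isMax_iff.2 ⟨i, h⟩)).not_ge (hf.1 h.le)

lemma IsReachMap.apply_top [OrderTop α] (hf : IsReachMap f) : f ⊤ = ⊤ :=
  top_unique (hf.le_apply ⊤)

lemma IsReachMap.bot_lt_apply [BoundedOrder α] [Nontrivial α] (hf : IsReachMap f) (i : α) :
    ⊥ < f i :=
  (hf.2 ⊥ (not_isMax_iff.2 ⟨⊤, bot_lt_top⟩)).trans_le (hf.1 bot_le)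

def reachGraph (f : α → α) : SimpleGraph α :=
  SimpleGraph.fromRel fun i j => i < j ∧ j ≤ f i

lemma reachGraph_adj_of_lt {i j : α} (hij : i < j) : (reachGraph f).Adj i j ↔ j ≤ f i := by
  simp [reachGraph, hij, hij.ne, hij.not_gt]

lemma IsReachMap.reachGraph_connected [Nonempty α] [WellFoundedGT α] (hf : IsReachMap f) :
    (reachGraph f).Connected := by
  have key : ∀ i j, i < j → (reachGraph f).Reachable i j := by
    intro i
    induction i using WellFoundedGT.induction with
    | _ i ih =>
      intro j hij
      have hi := hf.2 i (not_isMax_iff.2 ⟨j, hij⟩)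
      rcases le_or_gt j (f i) with hj | hj
      · exact ((reachGraph_adj_of_lt hij).2 hj).reachable
      · exact ((reachGraph_adj_of_lt hi).2 le_rfl).reachable.trans (ih _ hi j hj)
  refine (reachGraph f).connected_iff.2 ⟨fun i j => ?_, inferInstance⟩
  rcases lt_trichotomy i j with h | rfl | h
  · exact key i j h
  · rfl
  · exact (key j i h).symm

variable [Fintype α] {G : SimpleGraph α}

open Classical in
noncomputable def reach (G : SimpleGraph α) (i : α) : α :=
  (insert i (univ.filter fun j => i < j ∧ G.Adj i j)).max' (insert_nonempty _ _)

lemma le_reach (i : α) : i ≤ reach G i :=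
  le_max' _ i (mem_insert_self _ _)

lemma le_reach_of_adj {i j : α} (hij : i < j) (h : G.Adj i j) : j ≤ reach G i := by
  classical
  exact le_max' _ j (by simp [hij, h])

lemma adj_reach {i : α} (h : i < reach G i) : G.Adj i (reach G i) := by
  classical
  have hmem := max'_mem (insert i (univ.filter fun j => i < j ∧ G.Adj i j)) (insert_nonempty _ _)
  simp only [mem_insert, mem_filter, mem_univ, true_and] at hmem
  rcases hmem with he | ⟨-, hadj⟩
  · exact absurd he.symm h.ne
  · exact hadj

lemma reach_le {i c : α} (hic : i ≤ c) (h : ∀ j, i < j → G.Adj i j → j ≤ c) :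
    reach G i ≤ c := by
  classical
  refine max'_le _ _ _ fun j hj => ?_
  simp only [mem_insert, mem_filter, mem_univ, true_and] at hj
  rcases hj with rfl | ⟨hij, hadj⟩
  · exact hic
  · exact h j hij hadj

lemma reach_reachGraph (hf : ∀ i, i ≤ f i) : reach (reachGraph f) = f := by
  funext i
  refine le_antisymm (reach_le (hf i) fun j hij hadj => (reachGraph_adj_of_lt hij).1 hadj) ?_
  rcases (hf i).eq_or_lt with he | hlt
  · exact he ▸ le_reach i
  · exact le_reach_of_adj hlt ((reachGraph_adj_of_lt hlt).2 le_rfl)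

end ReachGraph

section IntervalCliqueGraphs

variable {n : ℕ} {G : SimpleGraph (Fin n)} {f : Fin n → Fin n}

lemma IntervalClique.adj_of_le (hG : IntervalClique G) {a b k l : Fin n} (hab : G.Adj a b)
    (hak : a ≤ k) (hkl : k < l) (hlb : l ≤ b) : G.Adj k l :=
  hG a b k l ((hak.trans_lt hkl).trans_le hlb) hab hak (hkl.le.trans hlb) (hak.trans hkl.le) hlb
    hkl.ne

lemma IntervalClique.adj_iff_le_reach (hG : IntervalClique G) {i j : Fin n} (hij : i < j) :
    G.Adj i j ↔ j ≤ reach G i := by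
  refine ⟨le_reach_of_adj hij, fun hj => ?_⟩
  exact hG.adj_of_le (adj_reach (hij.trans_le hj)) le_rfl hij hj

lemma IntervalClique.reachGraph_reach (hG : IntervalClique G) : reachGraph (reach G) = G := by
  ext i j
  rcases lt_trichotomy i j with h | rfl | h
  · rw [reachGraph_adj_of_lt h, hG.adj_iff_le_reach h]
  · simp
  · rw [SimpleGraph.adj_comm, G.adj_comm, reachGraph_adj_of_lt h, hG.adj_iff_le_reach h]

lemma IntervalClique.isReachMap_reach (hG : IntervalClique G) (hc : G.Connected) :
    IsReachMap (reach G) := by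
  refine ⟨fun i j hij => ?_, fun i hi => ?_⟩
  · rcases hij.eq_or_lt with rfl | hij
    · exact le_rfl
    rcases le_or_gt (reach G i) j with h | h
    · exact h.trans (le_reach j)
    · exact le_reach_of_adj h (hG.adj_of_le (adj_reach (hij.trans h)) hij.le h le_rfl)
  · obtain ⟨j, hij⟩ := not_isMax_iff.1 hi
    obtain ⟨d, -, hd, hd'⟩ := (hc.preconnected i j).some.exists_boundary_dart {x | x ≤ i}
      (le_refl i) (not_le.2 hij)
    simp only [Set.mem_ofPred_eq, not_le] at hd hd'
    exact hd'.trans_le (le_reach_of_adj hd' (hG.adj_of_le d.adj hd hd' le_rfl))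

lemma intervalClique_reachGraph (hf : Monotone f) : IntervalClique (reachGraph f) := by
  intro i j k l hij hadj hik hkj hil hlj hkl
  rw [reachGraph_adj_of_lt hij] at hadj
  rcases lt_or_gt_of_ne hkl with h | h
  · exact (reachGraph_adj_of_lt h).2 (hlj.trans (hadj.trans (hf hik)))
  · exact ((reachGraph_adj_of_lt h).2 (hkj.trans (hadj.trans (hf hil)))).symm

lemma isClique_reachGraph_Icc (hf : Monotone f) (i : Fin n) :
    (reachGraph f).IsClique (Icc i (f i) : Set (Fin n)) := by
  intro a ha b hb hab
  simp only [coe_Icc, Set.mem_Icc] at ha hb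
  rcases lt_or_gt_of_ne hab with h | h
  · exact (reachGraph_adj_of_lt h).2 (hb.2.trans (hf ha.1))
  · exact ((reachGraph_adj_of_lt h).2 (ha.2.trans (hf hb.1))).symm

lemma IsReachMap.subset_Icc_of_isClique (hf : IsReachMap f) {s : Finset (Fin n)}
    (hs : (reachGraph f).IsClique (s : Set (Fin n))) (hne : s.Nonempty) :
    s ⊆ Icc (s.min' hne) (f (s.min' hne)) := by
  intro x hx
  refine mem_Icc.2 ⟨min'_le s x hx, ?_⟩
  rcases (min'_le s x hx).eq_or_lt with h | h
  · exact h ▸ hf.le_apply x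
  · exact (reachGraph_adj_of_lt h).1 (hs (min'_mem s hne) hx h.ne)

lemma IsReachMap.isMaxClique_Icc (hf : IsReachMap f) {i : Fin n} (hi : i ∈ levelStarts f) :
    IsMaxClique (reachGraph f) (Icc i (f i)) := by
  refine ⟨isClique_reachGraph_Icc hf.1 i, fun t ht hsub => ?_⟩
  have hit : i ∈ t := hsub (left_mem_Icc.2 (hf.le_apply i))
  have hne : t.Nonempty := ⟨i, hit⟩
  have hmin : t.min' hne = i := by
    refine le_antisymm (min'_le t i hit) (le_of_not_gt fun hlt => ?_)
    have hfi := hf.subset_Icc_of_isClique ht hne (hsub (right_mem_Icc.2 (hf.le_apply i)))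
    exact (mem_levelStarts.1 hi _ hlt).not_ge (mem_Icc.1 hfi).2
  exact hsub.antisymm (hmin ▸ hf.subset_Icc_of_isClique ht hne)

lemma IsReachMap.exists_eq_Icc_of_isMaxClique [NeZero n] (hf : IsReachMap f)
    {s : Finset (Fin n)} (hs : IsMaxClique (reachGraph f) s) :
    ∃ i ∈ levelStarts f, Icc i (f i) = s := by
  have hne : s.Nonempty := by
    rw [nonempty_iff_ne_empty]
    rintro rfl
    exact singleton_ne_empty (0 : Fin n) (hs.2 {0} (by simp) (empty_subset _)).symm
  obtain ⟨p, hp, hpm, hfp⟩ := hf.1.exists_mem_levelStarts (s.min' hne)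
  refine ⟨p, hp, (hs.2 _ (isClique_reachGraph_Icc hf.1 p) ?_).symm⟩
  exact (hf.subset_Icc_of_isClique hs.1 hne).trans (Icc_subset_Icc hpm hfp.ge)

lemma IsReachMap.numMaxCliques_reachGraph [NeZero n] (hf : IsReachMap f) :
    numMaxCliques (reachGraph f) = #(levelStarts f) := by
  have hinj : Set.InjOn (fun i => Icc i (f i)) (levelStarts f) := by
    intro i _ j _ (h : Icc i (f i) = Icc j (f j))
    exact le_antisymm (mem_Icc.1 (h.symm ▸ left_mem_Icc.2 (hf.le_apply j))).1
      (mem_Icc.1 (h ▸ left_mem_Icc.2 (hf.le_apply i))).1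
  rw [numMaxCliques, ← card_image_of_injOn hinj, ← Nat.card_eq_finsetCard]
  refine Nat.card_congr (Equiv.subtypeEquivRight fun s => ?_)
  simp only [mem_image]
  exact ⟨hf.exists_eq_Icc_of_isMaxClique, fun ⟨i, hi, hs⟩ => hs ▸ hf.isMaxClique_Icc hi⟩

theorem card_intervalClique_connected_eq_card_reachMaps [NeZero n] (k : ℕ) :
    Nat.card {G : SimpleGraph (Fin n) // IntervalClique G ∧ G.Connected ∧ numMaxCliques G = k}
      = Nat.card {f : Fin n → Fin n // IsReachMap f ∧ #(levelStarts f) = k} :=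
  Nat.card_congr
    { toFun G := ⟨reach G.1, G.2.1.isReachMap_reach G.2.2.1, by
        rw [← (G.2.1.isReachMap_reach G.2.2.1).numMaxCliques_reachGraph, G.2.1.reachGraph_reach]
        exact G.2.2.2⟩
      invFun f := ⟨reachGraph f.1, intervalClique_reachGraph f.2.1.1,
        f.2.1.reachGraph_connected, f.2.1.numMaxCliques_reachGraph.trans f.2.2⟩
      left_inv G := Subtype.ext G.2.1.reachGraph_reach
      right_inv f := Subtype.ext (reach_reachGraph f.2.1.le_apply) }

end IntervalCliqueGraphs

section CountingPoints

variable {α : Type*} [LinearOrder α]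

def Dominates (A B : Finset α) : Prop :=
  ∀ x, #{b ∈ B | b ≤ x} ≤ #{a ∈ A | a ≤ x}

instance [Fintype α] (A B : Finset α) : Decidable (Dominates A B) :=
  inferInstanceAs (Decidable (∀ x, #{b ∈ B | b ≤ x} ≤ #{a ∈ A | a ≤ x}))

lemma card_filter_le_orderEmbOfFin (s : Finset α) (t : Fin #s) :
    #{a ∈ s | a ≤ s.orderEmbOfFin rfl t} = t + 1 := by
  have : {a ∈ s | a ≤ s.orderEmbOfFin rfl t} = (Iic t).image (s.orderEmbOfFin rfl) := by
    ext a
    simp only [mem_filter, mem_image, mem_Iic]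
    constructor
    · rintro ⟨ha, hat⟩
      obtain ⟨u, rfl⟩ : a ∈ Set.range (s.orderEmbOfFin rfl) := by
        rwa [range_orderEmbOfFin]
      exact ⟨u, (s.orderEmbOfFin rfl).le_iff_le.1 hat, rfl⟩
    · rintro ⟨u, hut, rfl⟩
      exact ⟨orderEmbOfFin_mem s rfl u, (s.orderEmbOfFin rfl).le_iff_le.2 hut⟩
  rw [this, card_image_of_injective _ (s.orderEmbOfFin rfl).injective, Fin.card_Iic]

lemma monotone_card_filter_le (A : Finset α) : Monotone fun i => #{a ∈ A | a ≤ i} :=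
  fun _ _ hij => card_le_card fun a ha => by
    simp only [mem_filter] at ha ⊢
    exact ⟨ha.1, ha.2.trans hij⟩

section

variable [Fintype α] [OrderBot α]

lemma image_card_filter_le {A : Finset α} (hA : ⊥ ∉ A) :
    univ.image (fun i => #{a ∈ A | a ≤ i}) = range (#A + 1) := by
  refine subset_antisymm (fun c hc => ?_) fun c hc => ?_
  · obtain ⟨i, -, rfl⟩ := mem_image.1 hc
    exact mem_range.2 (Nat.lt_succ_of_le (card_filter_le _ _))
  · rcases c with _ | t
    · refine mem_image.2 ⟨⊥, mem_univ _, card_eq_zero.2 (filter_eq_empty_iff.2 ?_)⟩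
      exact fun a ha h => hA (le_bot_iff.1 h ▸ ha)
    · exact mem_image.2 ⟨_, mem_univ _,
        card_filter_le_orderEmbOfFin A ⟨t, by simpa using mem_range.1 hc⟩⟩

lemma forall_lt_card_filter_le_lt_iff {A : Finset α} {i : α} :
    (∀ j < i, #{a ∈ A | a ≤ j} < #{a ∈ A | a ≤ i}) ↔ i = ⊥ ∨ i ∈ A := by
  refine ⟨fun h => or_iff_not_imp_left.2 fun hi => ?_, ?_⟩
  · obtain ⟨j, -, hj⟩ := exists_le_covBy_of_lt (bot_lt_iff_ne_bot.2 hi)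
    by_contra hiA
    refine (h j hj.lt).ne (congrArg card (filter_congr fun a ha => ?_))
    refine ⟨fun haj => haj.trans hj.le, fun hai => hj.le_of_lt (hai.lt_of_ne ?_)⟩
    rintro rfl
    exact hiA ha
  · rintro (rfl | hi) j hj
    · exact absurd hj not_lt_bot
    · refine card_lt_card ((ssubset_iff_of_subset fun a ha => ?_).2 ⟨i, ?_, ?_⟩)
      · simp only [mem_filter] at ha ⊢
        exact ⟨ha.1, ha.2.trans hj.le⟩
      · simp [hi]
      · simp [hj]

end

end CountingPoints

section StepFunctions

variable {α : Type*} [LinearOrder α] [OrderTop α]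

noncomputable def nthOrTop (B : Finset α) (c : ℕ) : α :=
  if h : c < #B then B.orderEmbOfFin rfl ⟨c, h⟩ else ⊤

lemma nthOrTop_mono (B : Finset α) : Monotone (nthOrTop B) := by
  intro c d hcd
  unfold nthOrTop
  split_ifs with hc hd
  · exact (B.orderEmbOfFin rfl).monotone (Fin.mk_le_mk.2 hcd)
  · exact le_top
  · omega
  · exact le_rfl

lemma nthOrTop_strictMonoOn {B : Finset α} (hB : ⊤ ∉ B) :
    StrictMonoOn (nthOrTop B) (Set.Iic #B) := by
  intro c _ d hd hcd
  have hc : c < #B := hcd.trans_le hd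
  unfold nthOrTop
  rw [dif_pos hc]
  split_ifs with hd'
  · exact (B.orderEmbOfFin rfl).strictMono (Fin.mk_lt_mk.2 hcd)
  · exact lt_top_iff_ne_top.2 fun h => hB (h ▸ orderEmbOfFin_mem B rfl _)

lemma image_nthOrTop (B : Finset α) : (range (#B + 1)).image (nthOrTop B) = insert ⊤ B := by
  ext v
  simp only [mem_image, mem_range, mem_insert]
  constructor
  · rintro ⟨c, -, rfl⟩
    unfold nthOrTop
    split_ifs
    · exact Or.inr (orderEmbOfFin_mem B rfl _)
    · exact Or.inl rfl
  · rintro (rfl | hv)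
    · exact ⟨#B, by omega, dif_neg (lt_irrefl _)⟩
    · obtain ⟨⟨c, hc⟩, rfl⟩ : v ∈ Set.range (B.orderEmbOfFin rfl) := by
        rwa [range_orderEmbOfFin]
      exact ⟨c, by omega, dif_pos hc⟩

noncomputable def stepFun (A B : Finset α) (i : α) : α :=
  nthOrTop B #{a ∈ A | a ≤ i}

lemma monotone_stepFun (A B : Finset α) : Monotone (stepFun A B) :=
  (nthOrTop_mono B).comp (monotone_card_filter_le A)

lemma isReachMap_stepFun {A B : Finset α} (hAB : Dominates A B) : IsReachMap (stepFun A B) := by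
  refine ⟨monotone_stepFun A B, fun i hi => ?_⟩
  unfold stepFun nthOrTop
  split_ifs with hc
  · refine lt_of_not_ge fun hle => ?_
    have := (card_filter_le_orderEmbOfFin B ⟨_, hc⟩).symm.trans_le
      (monotone_card_filter_le B hle)
    exact absurd (this.trans (hAB i)) (by simp)
  · exact lt_top_iff_ne_top.2 fun h => hi (h ▸ isMax_top)

variable [Fintype α] [OrderBot α]

lemma image_stepFun {A B : Finset α} (hA : ⊥ ∉ A) (hAB : #A = #B) :
    univ.image (stepFun A B) = insert ⊤ B := by
  rw [← image_nthOrTop, ← hAB, ← image_card_filter_le hA, image_image]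
  rfl

lemma levelStarts_stepFun {A B : Finset α} (hB : ⊤ ∉ B) (hAB : #A = #B) :
    levelStarts (stepFun A B) = insert ⊥ A := by
  ext i
  have hcard : ∀ j, #{a ∈ A | a ≤ j} ∈ Set.Iic #B := fun j => hAB ▸ card_filter_le _ _
  simp only [mem_levelStarts, stepFun, (nthOrTop_strictMonoOn hB).lt_iff_lt (hcard _) (hcard _),
    forall_lt_card_filter_le_lt_iff, mem_insert]

end StepFunctions

section ReachMapsAsPairs

variable {α : Type*} [LinearOrder α] [Fintype α] [BoundedOrder α] {f : α → α}

lemma IsReachMap.top_notMem_levelStarts [Nontrivial α] (hf : IsReachMap f) :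
    ⊤ ∉ levelStarts f := by
  intro h
  obtain ⟨x, -, hx⟩ := exists_le_covBy_of_lt (bot_lt_top : (⊥ : α) < ⊤)
  have hfx := mem_levelStarts.1 h x hx.lt
  rw [hf.apply_top] at hfx
  exact (hf.2 x (not_isMax_iff.2 ⟨⊤, hx.lt⟩)).not_ge (hx.le_of_lt hfx)

lemma IsReachMap.dominates (hf : IsReachMap f) :
    Dominates ((levelStarts f).erase ⊥) ((univ.image f).erase ⊤) := by
  intro x
  have hsub : {b ∈ (univ.image f).erase ⊤ | b ≤ x} ⊆
      {v ∈ univ.image f | v ≤ f x}.erase (f x) := by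
    intro v hv
    simp only [mem_filter, mem_erase] at hv ⊢
    refine ⟨fun hvx => ?_, hv.1.2, hv.2.trans (hf.le_apply x)⟩
    by_cases hx : IsMax x
    · exact hv.1.1 (hvx.trans (hx.eq_top ▸ hf.apply_top))
    · exact (hvx ▸ hv.2).not_gt (hf.2 x hx)
  calc #{b ∈ (univ.image f).erase ⊤ | b ≤ x}
      ≤ #({v ∈ univ.image f | v ≤ f x}.erase (f x)) := card_le_card hsub
    _ = #{p ∈ levelStarts f | p ≤ x} - 1 := by
      rw [card_erase_of_mem (by simp), hf.1.card_filter_image_le]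
    _ = #{a ∈ (levelStarts f).erase ⊥ | a ≤ x} := by
      rw [filter_erase, card_erase_of_mem
        (mem_filter.2 ⟨bot_mem_levelStarts, bot_le⟩ : ⊥ ∈ {p ∈ levelStarts f | p ≤ x})]

lemma IsReachMap.top_mem_image (hf : IsReachMap f) : ⊤ ∈ univ.image f :=
  mem_image.2 ⟨⊤, mem_univ _, hf.apply_top⟩

lemma IsReachMap.card_erase_levelStarts (hf : IsReachMap f) :
    #((levelStarts f).erase ⊥) = #((univ.image f).erase ⊤) := by
  rw [card_erase_of_mem bot_mem_levelStarts, card_erase_of_mem hf.top_mem_image,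
    hf.1.card_levelStarts]

lemma IsReachMap.stepFun_erase_eq (hf : IsReachMap f) :
    stepFun ((levelStarts f).erase ⊥) ((univ.image f).erase ⊤) = f := by
  refine (monotone_stepFun _ _).eq_of_levelStarts_eq_of_image_eq hf.1 ?_ ?_
  · rw [levelStarts_stepFun (notMem_erase _ _) hf.card_erase_levelStarts,
      insert_erase bot_mem_levelStarts]
  · rw [image_stepFun (notMem_erase _ _) hf.card_erase_levelStarts,
      insert_erase hf.top_mem_image]

lemma mem_powersetCard_sdiff_bot_top {A : Finset α} {r : ℕ} :
    A ∈ (univ \ {⊥, ⊤}).powersetCard r ↔ ⊥ ∉ A ∧ ⊤ ∉ A ∧ #A = r := by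
  simp [mem_powersetCard, subset_sdiff, disjoint_insert_right, and_assoc]

variable [Nontrivial α]

theorem card_reachMaps_eq_card_dominates (r : ℕ) :
    Nat.card {f : α → α // IsReachMap f ∧ #(levelStarts f) = r + 1} =
      #{p ∈ (univ \ {⊥, ⊤} : Finset α).powersetCard r ×ˢ
        (univ \ {⊥, ⊤}).powersetCard r | Dominates p.1 p.2} := by
  rw [← Nat.card_eq_finsetCard]
  refine Nat.card_congr
    { toFun f := ⟨((levelStarts f.1).erase ⊥, (univ.image f.1).erase ⊤), ?_⟩
      invFun p := ⟨stepFun p.1.1 p.1.2, ?_⟩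
      left_inv f := Subtype.ext ?_
      right_inv p := Subtype.ext ?_ }
  · obtain ⟨f, hf, hr⟩ := f
    have hr' : #((levelStarts f).erase ⊥) = r := by
      rw [card_erase_of_mem bot_mem_levelStarts, hr, Nat.add_sub_cancel]
    simp only [mem_filter, mem_product, mem_powersetCard_sdiff_bot_top, notMem_erase,
      not_false_eq_true, true_and, hf.dominates, and_true]
    refine ⟨⟨mt mem_of_mem_erase hf.top_notMem_levelStarts, hr'⟩, ?_,
      hf.card_erase_levelStarts ▸ hr'⟩
    simpa using fun i => (hf.bot_lt_apply i).ne'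
  · obtain ⟨⟨A, B⟩, hp⟩ := p
    obtain ⟨⟨⟨hA, -, hAr⟩, -, hB, hBr⟩, hAB⟩ := by
      simpa only [mem_filter, mem_product, mem_powersetCard_sdiff_bot_top] using hp
    refine ⟨isReachMap_stepFun hAB, ?_⟩
    rw [levelStarts_stepFun hB (hAr.trans hBr.symm), card_insert_of_notMem hA, hAr]
  · exact f.2.1.stepFun_erase_eq
  · obtain ⟨⟨A, B⟩, hp⟩ := p
    obtain ⟨⟨⟨hA, -, hAr⟩, -, hB, hBr⟩, -⟩ := by
      simpa only [mem_filter, mem_product, mem_powersetCard_sdiff_bot_top] using hp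
    have hAB : #A = #B := hAr.trans hBr.symm
    exact Prod.ext (by simp [levelStarts_stepFun hB hAB, erase_insert hA])
      (by simp [image_stepFun hA hAB, erase_insert hB])

end ReachMapsAsPairs

section Reflection

variable {α : Type*} [LinearOrder α] {A B : Finset α} {x y : α}

lemma Dominates.card_le (h : Dominates A B) : #B ≤ #A := by
  rcases (A ∪ B).eq_empty_or_nonempty with hAB | hne
  · simp [union_eq_empty.1 hAB]
  · have hx := h ((A ∪ B).max' hne)
    rwa [filter_true_of_mem fun b hb => le_max' _ b (mem_union_right A hb),
      filter_true_of_mem fun a ha => le_max' _ a (mem_union_left B ha)] at hx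

def crossings (A B : Finset α) : Finset α :=
  {x ∈ B | #{a ∈ A | a ≤ x} < #{b ∈ B | b ≤ x}}

lemma filter_le_max'_filter {s : Finset α} {P : α → Prop} [DecidablePred P]
    (hP : ∀ a b, a ≤ b → P b → P a) (hne : {b ∈ s | P b}.Nonempty) :
    {b ∈ s | b ≤ {b ∈ s | P b}.max' hne} = {b ∈ s | P b} := by
  ext b
  simp only [mem_filter, and_congr_right_iff]
  exact fun hb => ⟨fun h => hP _ _ h (mem_filter.1 (max'_mem _ hne)).2,
    fun h => le_max' _ b (mem_filter.2 ⟨hb, h⟩)⟩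

lemma crossings_nonempty_iff : (crossings A B).Nonempty ↔ ¬Dominates A B := by
  refine ⟨fun ⟨x, hx⟩ h => ((mem_filter.1 hx).2).not_ge (h x), fun h => ?_⟩
  obtain ⟨x, hx⟩ := not_forall.1 h
  rw [not_le] at hx
  have hne : {b ∈ B | b ≤ x}.Nonempty := card_pos.1 (hx.trans_le' (Nat.zero_le _))
  refine ⟨_, mem_filter.2 ⟨(mem_filter.1 (max'_mem _ hne)).1, ?_⟩⟩
  rw [filter_le_max'_filter (fun _ _ hab hb => hab.trans hb)]
  exact hx.trans_le' (monotone_card_filter_le A (mem_filter.1 (max'_mem _ hne)).2)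

lemma card_filter_le_of_isLeast_crossings (hx : IsLeast (crossings A B : Set α) x) :
    #{b ∈ B | b ≤ x} = #{a ∈ A | a ≤ x} + 1 := by
  obtain ⟨hxB, hcross⟩ := mem_filter.1 hx.1
  have hsplit : {b ∈ B | b ≤ x} = insert x {b ∈ B | b < x} := by
    ext b
    simp only [mem_filter, mem_insert, le_iff_lt_or_eq]
    constructor
    · rintro ⟨hb, hbx | rfl⟩
      exacts [Or.inr ⟨hb, hbx⟩, Or.inl rfl]
    · rintro (rfl | ⟨hb, hbx⟩)
      exacts [⟨hxB, Or.inr rfl⟩, ⟨hb, Or.inl hbx⟩]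
  have hbefore : #{b ∈ B | b < x} ≤ #{a ∈ A | a ≤ x} := by
    by_contra! hlt
    have hne : {b ∈ B | b < x}.Nonempty := card_pos.1 (hlt.trans_le' (Nat.zero_le _))
    obtain ⟨hyB, hyx⟩ := mem_filter.1 (max'_mem _ hne)
    refine hyx.not_ge (hx.2 (mem_filter.2 ⟨hyB, ?_⟩))
    rw [filter_le_max'_filter (fun _ _ hab hb => hab.trans_lt hb)]
    exact hlt.trans_le' (monotone_card_filter_le A hyx.le)
  rw [hsplit, card_insert_of_notMem (by simp)] at hcross ⊢
  omega

def swapAt (x : α) (A B : Finset α) : Finset α :=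
  {a ∈ A | a ≤ x} ∪ {b ∈ B | x < b}

lemma swapAt_subset : swapAt x A B ⊆ A ∪ B :=
  union_subset_union (filter_subset _ _) (filter_subset _ _)

lemma filter_le_swapAt (hy : y ≤ x) : {a ∈ swapAt x A B | a ≤ y} = {a ∈ A | a ≤ y} := by
  ext a
  simp only [swapAt, mem_filter, mem_union]
  constructor
  · rintro ⟨⟨ha, -⟩ | ⟨-, hxa⟩, hay⟩
    · exact ⟨ha, hay⟩
    · exact absurd (hay.trans hy) hxa.not_ge
  · rintro ⟨ha, hay⟩
    exact ⟨Or.inl ⟨ha, hay.trans hy⟩, hay⟩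

lemma swapAt_swapAt : swapAt x (swapAt x A B) (swapAt x B A) = A := by
  ext a
  rcases le_or_gt a x with h | h
  · simp [swapAt, h, h.not_gt]
  · simp [swapAt, h, h.not_ge]

lemma card_swapAt : #(swapAt x A B) = #{a ∈ A | a ≤ x} + #{b ∈ B | x < b} :=
  card_union_of_disjoint <| disjoint_left.2 fun _ h1 h2 =>
    (mem_filter.1 h1).2.not_gt (mem_filter.1 h2).2

lemma card_filter_le_add_card_filter_lt (s : Finset α) (x : α) :
    #{a ∈ s | a ≤ x} + #{a ∈ s | x < a} = #s := by
  simpa only [not_le] using card_filter_add_card_filter_not (s := s) (· ≤ x)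

lemma mem_crossings_swapAt_iff (hy : y ≤ x) :
    y ∈ crossings (swapAt x A B) (swapAt x B A) ↔ y ∈ crossings A B := by
  simp only [crossings, mem_filter, filter_le_swapAt hy]
  simp [swapAt, hy, hy.not_gt]

lemma isLeast_crossings_swapAt (hx : IsLeast (crossings A B : Set α) x) :
    IsLeast (crossings (swapAt x A B) (swapAt x B A) : Set α) x :=
  ⟨(mem_crossings_swapAt_iff le_rfl).2 hx.1, fun _ hy => le_of_not_gt fun hyx =>
    hyx.not_ge (hx.2 ((mem_crossings_swapAt_iff hyx.le).1 hy))⟩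

lemma card_swapAt_add_one (hx : IsLeast (crossings A B : Set α) x) :
    #(swapAt x A B) + 1 = #B := by
  rw [card_swapAt, ← card_filter_le_add_card_filter_lt B x,
    card_filter_le_of_isLeast_crossings hx]
  omega

lemma card_swapAt_swap (hx : IsLeast (crossings A B : Set α) x) :
    #(swapAt x B A) = #A + 1 := by
  rw [card_swapAt, ← card_filter_le_add_card_filter_lt A x,
    card_filter_le_of_isLeast_crossings hx]
  omega

noncomputable def reflect (p : Finset α × Finset α) : Finset α × Finset α :=
  if h : (crossings p.1 p.2).Nonempty then
    (swapAt ((crossings p.1 p.2).min' h) p.1 p.2, swapAt ((crossings p.1 p.2).min' h) p.2 p.1)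
  else p

lemma reflect_eq (hx : IsLeast (crossings A B : Set α) x) :
    reflect (A, B) = (swapAt x A B, swapAt x B A) := by
  have hne : (crossings A B).Nonempty := ⟨x, hx.1⟩
  rw [reflect, dif_pos hne, (isLeast_min' _ hne).unique hx]

lemma reflect_involutive : Function.Involutive (reflect (α := α)) := by
  rintro ⟨A, B⟩
  by_cases h : (crossings A B).Nonempty
  · have hx := isLeast_min' _ h
    rw [reflect_eq hx, reflect_eq (isLeast_crossings_swapAt hx), swapAt_swapAt, swapAt_swapAt]
  · simp [reflect, h]

lemma reflect_mem_of_not_dominates {T : Finset α} {r : ℕ} {A B : Finset α}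
    (hA : A ∈ T.powersetCard (r + 1)) (hB : B ∈ T.powersetCard (r + 1)) (h : ¬Dominates A B) :
    reflect (A, B) ∈ T.powersetCard r ×ˢ T.powersetCard (r + 2) := by
  rw [mem_powersetCard] at hA hB
  obtain ⟨x, hx⟩ : ∃ x, IsLeast (crossings A B : Set α) x :=
    ⟨_, isLeast_min' _ (crossings_nonempty_iff.2 h)⟩
  have h1 := card_swapAt_add_one hx
  rw [reflect_eq hx, mem_product, mem_powersetCard, mem_powersetCard]
  dsimp only
  exact ⟨⟨swapAt_subset.trans (union_subset hA.1 hB.1), by omega⟩,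
    swapAt_subset.trans (union_subset hB.1 hA.1), by rw [card_swapAt_swap hx, hA.2]⟩

lemma reflect_mem_of_card {T : Finset α} {r : ℕ} {A B : Finset α}
    (hA : A ∈ T.powersetCard r) (hB : B ∈ T.powersetCard (r + 2)) :
    reflect (A, B) ∈ T.powersetCard (r + 1) ×ˢ T.powersetCard (r + 1) ∧
      ¬Dominates (reflect (A, B)).1 (reflect (A, B)).2 := by
  rw [mem_powersetCard] at hA hB
  obtain ⟨x, hx⟩ : ∃ x, IsLeast (crossings A B : Set α) x :=
    ⟨_, isLeast_min' _ (crossings_nonempty_iff.2 fun h => by have := h.card_le; omega)⟩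
  have h1 := card_swapAt_add_one hx
  rw [reflect_eq hx, mem_product, mem_powersetCard, mem_powersetCard, ← crossings_nonempty_iff]
  dsimp only
  exact ⟨⟨⟨swapAt_subset.trans (union_subset hA.1 hB.1), by omega⟩,
    swapAt_subset.trans (union_subset hB.1 hA.1), by rw [card_swapAt_swap hx, hA.2]⟩,
    _, (isLeast_crossings_swapAt hx).1⟩

theorem card_dominates_add_choose_mul_choose (T : Finset α) (r : ℕ)
    [DecidablePred fun p : Finset α × Finset α => Dominates p.1 p.2] :
    #{p ∈ T.powersetCard (r + 1) ×ˢ T.powersetCard (r + 1) | Dominates p.1 p.2} +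
      (#T).choose r * (#T).choose (r + 2) = (#T).choose (r + 1) ^ 2 := by
  have hbad : #{p ∈ T.powersetCard (r + 1) ×ˢ T.powersetCard (r + 1) | ¬Dominates p.1 p.2} =
      #(T.powersetCard r ×ˢ T.powersetCard (r + 2)) := by
    refine card_nbij' reflect reflect ?_ ?_ (fun p _ => reflect_involutive p)
      (fun p _ => reflect_involutive p)
    · rintro ⟨A, B⟩ hp
      simp only [coe_filter, mem_product, Set.mem_ofPred_eq] at hp
      exact reflect_mem_of_not_dominates hp.1.1 hp.1.2 hp.2
    · rintro ⟨A, B⟩ hp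
      simp only [coe_product, Set.mem_prod, mem_coe] at hp
      simpa only [coe_filter, mem_product, Set.mem_ofPred_eq] using reflect_mem_of_card hp.1 hp.2
  have := card_filter_add_card_filter_not (s := T.powersetCard (r + 1) ×ˢ T.powersetCard (r + 1))
    (fun p => Dominates p.1 p.2)
  rw [hbad, card_product, card_product, card_powersetCard, card_powersetCard,
    card_powersetCard] at this
  rw [sq, this]

end Reflection

lemma succ_mul_choose_sq (N s : ℕ) :
    (N + 1) * N.choose (s + 1) ^ 2 =
      (N + 1).choose (s + 1) * (N + 1).choose (s + 2) +
        (N + 1) * (N.choose s * N.choose (s + 2)) := by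
  rcases lt_or_ge N (s + 1) with h | h
  · simp [Nat.choose_eq_zero_of_lt h, Nat.choose_eq_zero_of_lt (by omega : N + 1 < s + 2),
      Nat.choose_eq_zero_of_lt (by omega : N < s + 2)]
  obtain ⟨b, rfl⟩ : ∃ b, N = s + 1 + b := ⟨N - (s + 1), by omega⟩
  have hy := Nat.choose_succ_right_eq (s + 1 + b) (s + 1)
  have hz := Nat.choose_succ_right_eq (s + 1 + b) s
  rw [show s + 1 + b - (s + 1) = b by omega] at hy
  rw [show s + 1 + b - s = b + 1 by omega] at hz
  rw [Nat.choose_succ_succ (s + 1 + b) s, Nat.choose_succ_succ (s + 1 + b) (s + 1)]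
  set x := (s + 1 + b).choose (s + 1)
  set y := (s + 1 + b).choose (s + 2)
  set z := (s + 1 + b).choose s
  refine Nat.eq_of_mul_eq_mul_right (by positivity : 0 < (s + 2) * (b + 1)) ?_
  zify at hy hz ⊢
  -- substitute `y * (s + 2) = x * b` and `z * (b + 1) = x * (s + 1)`
  linear_combination
    (-(x * (b + 1) + z * (b + 1) + (s + b + 2) * (z * (b + 1))) : ℤ) * hy +
    (x * (s + 2) + x * b + (s + b + 2) * x * b : ℤ) * hz

theorem card_connected_intervalClique_with_k_max_cliques_general (n k : ℕ) (hn : 2 ≤ n)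
    (hk1 : 1 ≤ k) :
    Nat.card {G : SimpleGraph (Fin n) // IntervalClique G ∧ G.Connected ∧ numMaxCliques G = k}
        * (n - 1)
      = (n - 1).choose k * (n - 1).choose (k - 1) := by
  obtain ⟨N, rfl⟩ : ∃ N, n = N + 2 := ⟨n - 2, by omega⟩
  obtain ⟨r, rfl⟩ : ∃ r, k = r + 1 := ⟨k - 1, by omega⟩
  have hT : #(univ \ {⊥, ⊤} : Finset (Fin (N + 2))) = N := by
    rw [card_sdiff, inter_univ, card_pair bot_ne_top, card_univ, Fintype.card_fin]
    rfl
  rw [card_intervalClique_connected_eq_card_reachMaps, card_reachMaps_eq_card_dominates,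
    Nat.add_sub_cancel, show N + 2 - 1 = N + 1 from rfl]
  rcases r with _ | s
  · have : Dominates (∅ : Finset (Fin (N + 2))) ∅ := fun _ => le_rfl
    simp [filter_singleton, this]
  · have hD := card_dominates_add_choose_mul_choose (univ \ {⊥, ⊤} : Finset (Fin (N + 2))) s
    rw [hT] at hD
    have := succ_mul_choose_sq N s
    rw [← hD] at this
    linarith

/-- for `n ≥ 2` and `1 ≤ k ≤ n-1`, the number of connected interval-clique
graphs on `{1,...,n}` with exactly `k` maximal cliques equals
`(1/(n-1))·C(n-1,k)·C(n-1,k-1)` (stated in cleared-denominator form). -/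
theorem card_connected_intervalClique_with_k_max_cliques (n k : ℕ) (hn : 2 ≤ n)
    (hk1 : 1 ≤ k) (hkn : k ≤ n - 1) :
    Nat.card {G : SimpleGraph (Fin n) // IntervalClique G ∧ G.Connected ∧ numMaxCliques G = k}
        * (n - 1)
      = (n - 1).choose k * (n - 1).choose (k - 1) :=
  card_connected_intervalClique_with_k_max_cliques_general n k hn hk1
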